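/- A finite digraph D has complementarity spectrum equal to {0} if and only if D is acyclic. -/

import Mathlib

/-!
If `D` has a directed cycle, a closed walk of minimal length has no chord, since a chord would
close up a shorter walk. The indicator `x` of its vertices then satisfies `A x = x` on the cycle
and `A x ≥ 0` elsewhere, so `1 ∈ Π(D)`. If `D` is acyclic, the support of any complementarity
vector `x` contains a vertex `v` with no out-neighbour in the support, so
`λ x_v = (A x)_v = 0` forces `λ = 0`; the unit vector at a sink shows `0 ∈ Π(D)`.
-/

open Matrix
open scoped Classical

noncomputable section

/-- Adjacency matrix of a digraph given by an arc relation `E`. -/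
def adjMat {V : Type*} (E : V → V → Prop) : Matrix V V ℝ :=
  Matrix.of fun i j => if E i j then (1 : ℝ) else 0

/-- Spectral radius of a real square matrix: the largest modulus of a (complex) eigenvalue. -/
def matSpecRad {n : Type*} [Fintype n] (A : Matrix n n ℝ) : ℝ :=
  sSup {r : ℝ | ∃ μ ∈ spectrum ℂ (A.map (fun x => (x : ℂ))), r = ‖μ‖}

/-- Spectral radius of a digraph. -/
def rho {V : Type*} [Fintype V] (E : V → V → Prop) : ℝ :=
  matSpecRad (adjMat E)

/-- The complementarity spectrum of a real square matrix. -/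
def compSpec {n : Type*} [Fintype n] (A : Matrix n n ℝ) : Set ℝ :=
  {lam | ∃ x : n → ℝ, x ≠ 0 ∧ 0 ≤ x ∧ 0 ≤ A.mulVec x - lam • x ∧
    x ⬝ᵥ (A.mulVec x - lam • x) = 0}

/-- Reachability by directed paths. -/
def Reach {V : Type*} (E : V → V → Prop) : V → V → Prop :=
  Relation.ReflTransGen E

/-- A digraph is strongly connected if every vertex reaches every other one. -/
def StronglyConnected {V : Type*} (E : V → V → Prop) : Prop :=
  ∀ u v, Reach E u v

/-- Induced subdigraph on a vertex subset `S`. -/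
def induceRel {V : Type*} (E : V → V → Prop) (S : Set V) : S → S → Prop :=
  fun a b => E a.1 b.1

/-- Spectral radius of the induced subdigraph on `S`. -/
def specRadOn {V : Type*} [Fintype V] (E : V → V → Prop) (S : Set V) : ℝ :=
  @rho S (Set.Finite.fintype S.toFinite) (induceRel E S)

/-- Complementarity spectrum of the induced subdigraph on `S`. -/
def compSpecOn {V : Type*} [Fintype V] (E : V → V → Prop) (S : Set V) : Set ℝ :=
  @compSpec S (Set.Finite.fintype S.toFinite) (adjMat (induceRel E S))

/-- Isomorphism of digraphs. -/
def IsoDigraph {V W : Type*} (E : V → V → Prop) (F : W → W → Prop) : Prop :=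
  ∃ e : V ≃ W, ∀ a b, E a b ↔ F (e a) (e b)

/-- The directed cycle on `n` vertices. -/
def cycleRel (n : ℕ) : ZMod n → ZMod n → Prop := fun i j => j = i + 1

/-- A digraph is a directed cycle if it is isomorphic to some `C⃗_n`, `n ≥ 2`. -/
def IsCycleDigraph {V : Type*} (E : V → V → Prop) : Prop :=
  ∃ n : ℕ, 2 ≤ n ∧ IsoDigraph E (cycleRel n)

/-- A digraph is acyclic if it has no directed cycle. -/
def Acyclic {V : Type*} (E : V → V → Prop) : Prop :=
  ∀ v, ¬ Relation.TransGen E v v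

/-- Strongly connected component of the vertex `v`. -/
def component {V : Type*} (E : V → V → Prop) (v : V) : Set V :=
  {u | Reach E u v ∧ Reach E v u}

/-- `D` has an `∞(r,s)`-subdigraph: two directed cycles of lengths `r` and `s`
sharing exactly one vertex, all of whose arcs are arcs of `D`. -/
def InftySub {V : Type*} (E : V → V → Prop) (r s : ℕ) : Prop :=
  ∃ (f : ZMod r → V) (g : ZMod s → V),
    Function.Injective f ∧ Function.Injective g ∧ f 0 = g 0 ∧
    Set.range f ∩ Set.range g = {f 0} ∧
    (∀ i, E (f i) (f (i + 1))) ∧ (∀ j, E (g j) (g (j + 1)))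

/-- `D` has a `θ(a,b,c)`-subdigraph: three internally disjoint directed paths,
two from `v` to `w` (of lengths `a+1` and `b+1`) and one from `w` to `v`
(of length `c+1`), all of whose arcs are arcs of `D`. -/
def ThetaSub {V : Type*} (E : V → V → Prop) (a b c : ℕ) : Prop :=
  ∃ (P : Fin (a + 2) → V) (Q : Fin (b + 2) → V) (R : Fin (c + 2) → V),
    Function.Injective P ∧ Function.Injective Q ∧ Function.Injective R ∧
    P 0 = Q 0 ∧ Q 0 = R (Fin.last (c + 1)) ∧
    P (Fin.last (a + 1)) = Q (Fin.last (b + 1)) ∧ Q (Fin.last (b + 1)) = R 0 ∧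
    (∀ i j, P i = Q j → (i = 0 ∧ j = 0) ∨ (i = Fin.last (a + 1) ∧ j = Fin.last (b + 1))) ∧
    (∀ i j, P i = R j → (i = 0 ∧ j = Fin.last (c + 1)) ∨ (i = Fin.last (a + 1) ∧ j = 0)) ∧
    (∀ i j, Q i = R j → (i = 0 ∧ j = Fin.last (c + 1)) ∨ (i = Fin.last (b + 1) ∧ j = 0)) ∧
    (∀ i : Fin (a + 1), E (P i.castSucc) (P i.succ)) ∧
    (∀ i : Fin (b + 1), E (Q i.castSucc) (Q i.succ)) ∧
    (∀ i : Fin (c + 1), E (R i.castSucc) (R i.succ))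

/-- `D` is (isomorphic to) the `∞(r,s)` digraph: the coalescence of the directed
cycles `C⃗_r` and `C⃗_s` at one vertex, with no further vertices or arcs. -/
def IsInftyDigraph {V : Type*} (E : V → V → Prop) (r s : ℕ) : Prop :=
  ∃ (f : ZMod r → V) (g : ZMod s → V),
    Function.Injective f ∧ Function.Injective g ∧ f 0 = g 0 ∧
    Set.range f ∩ Set.range g = {f 0} ∧
    Set.range f ∪ Set.range g = Set.univ ∧
    ∀ u v, E u v ↔ ((∃ i, u = f i ∧ v = f (i + 1)) ∨ (∃ j, u = g j ∧ v = g (j + 1)))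

/-- `D` is (isomorphic to) the `θ(a,b,c)` digraph: three internally disjoint
directed paths, two from `v` to `w` and one from `w` to `v`, with no further
vertices or arcs. -/
def IsThetaDigraph {V : Type*} (E : V → V → Prop) (a b c : ℕ) : Prop :=
  ∃ (P : Fin (a + 2) → V) (Q : Fin (b + 2) → V) (R : Fin (c + 2) → V),
    Function.Injective P ∧ Function.Injective Q ∧ Function.Injective R ∧
    P 0 = Q 0 ∧ Q 0 = R (Fin.last (c + 1)) ∧
    P (Fin.last (a + 1)) = Q (Fin.last (b + 1)) ∧ Q (Fin.last (b + 1)) = R 0 ∧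
    (∀ i j, P i = Q j → (i = 0 ∧ j = 0) ∨ (i = Fin.last (a + 1) ∧ j = Fin.last (b + 1))) ∧
    (∀ i j, P i = R j → (i = 0 ∧ j = Fin.last (c + 1)) ∨ (i = Fin.last (a + 1) ∧ j = 0)) ∧
    (∀ i j, Q i = R j → (i = 0 ∧ j = Fin.last (c + 1)) ∨ (i = Fin.last (b + 1) ∧ j = 0)) ∧
    Set.range P ∪ Set.range Q ∪ Set.range R = Set.univ ∧
    (∀ u v, E u v ↔
      ((∃ i : Fin (a + 1), u = P i.castSucc ∧ v = P i.succ) ∨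
       (∃ i : Fin (b + 1), u = Q i.castSucc ∧ v = Q i.succ) ∨
       (∃ i : Fin (c + 1), u = R i.castSucc ∧ v = R i.succ)))

open Finset Relation

section CompSpec

variable {n : Type*} [Fintype n] {A : Matrix n n ℝ} {lam : ℝ} {x : n → ℝ}

theorem mulVec_apply_eq_of_complementarity (hx : 0 ≤ x) (hy : 0 ≤ A *ᵥ x - lam • x)
    (hxy : x ⬝ᵥ (A *ᵥ x - lam • x) = 0) {i : n} (hi : x i ≠ 0) :
    (A *ᵥ x) i = lam * x i := by
  have hterm := (sum_eq_zero_iff_of_nonneg fun j _ => mul_nonneg (hx j) (hy j)).mp hxy i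
    (mem_univ i)
  have := (mul_eq_zero.mp hterm).resolve_left hi
  simp only [Pi.sub_apply, Pi.smul_apply, smul_eq_mul] at this
  linarith

theorem mem_compSpec_of_mulVec_apply_eq (hA : ∀ i j, 0 ≤ A i j) (hx0 : x ≠ 0) (hx : 0 ≤ x)
    (hAx : ∀ i, x i ≠ 0 → (A *ᵥ x) i = lam * x i) : lam ∈ compSpec A := by
  have hzero : ∀ i, x i ≠ 0 → (A *ᵥ x - lam • x) i = 0 := fun i hi => by
    simp [hAx i hi]
  refine ⟨x, hx0, hx, fun i => ?_, sum_eq_zero fun i _ => ?_⟩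
  · by_cases hi : x i = 0
    · simpa [hi, Matrix.mulVec, dotProduct] using
        sum_nonneg fun j _ => mul_nonneg (hA i j) (hx j)
    · exact (hzero i hi).ge
  · by_cases hi : x i = 0
    · simp [hi]
    · simp [hzero i hi]

end CompSpec

section Digraph

variable {V : Type*} {E : V → V → Prop}

theorem adjMat_nonneg (i j : V) : 0 ≤ adjMat E i j := by
  by_cases h : E i j <;> simp [adjMat, h]

theorem adjMat_mulVec_apply [Fintype V] (x : V → ℝ) (u : V) :
    (adjMat E *ᵥ x) u = ∑ w with E u w, x w := by
  simp [adjMat, Matrix.mulVec, dotProduct, ite_mul, sum_filter]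

theorem Acyclic.exists_forall_not_rel [Finite V] (hE : Acyclic E) {S : Set V}
    (hS : S.Nonempty) : ∃ v ∈ S, ∀ w ∈ S, ¬ E v w := by
  have : IsTrans V (flip (TransGen E)) := ⟨fun _ _ _ h₁ h₂ => h₂.trans h₁⟩
  have : Std.Irrefl (flip (TransGen E)) := ⟨hE⟩
  obtain ⟨v, hv, hmin⟩ :=
    (Finite.wellFounded_of_trans_of_irrefl (flip (TransGen E))).has_min S hS
  exact ⟨v, hv, fun w hw hvw => hmin w hw (.single hvw)⟩

theorem Acyclic.eq_zero_of_mem_compSpec [Fintype V] (hE : Acyclic E) {lam : ℝ}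
    (hlam : lam ∈ compSpec (adjMat E)) : lam = 0 := by
  obtain ⟨x, hx0, hx, hy, hxy⟩ := hlam
  obtain ⟨v, hv, hsink⟩ := hE.exists_forall_not_rel (S := {u | x u ≠ 0})
    (Function.ne_iff.mp hx0)
  have hAx : (adjMat E *ᵥ x) v = 0 := by
    rw [adjMat_mulVec_apply]
    refine sum_eq_zero fun w hw => ?_
    by_contra hxw
    exact hsink w hxw (mem_filter.mp hw).2
  have := mulVec_apply_eq_of_complementarity hx hy hxy hv
  rw [hAx, eq_comm, mul_eq_zero] at this
  exact this.resolve_right hv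

theorem Acyclic.zero_mem_compSpec [Fintype V] [Nonempty V] (hE : Acyclic E) :
    0 ∈ compSpec (adjMat E) := by
  obtain ⟨v, -, hsink⟩ := hE.exists_forall_not_rel Set.univ_nonempty
  refine mem_compSpec_of_mulVec_apply_eq adjMat_nonneg (x := Pi.single v 1) ?_ ?_ fun i hi => ?_
  · simp [funext_iff, Pi.single_apply]
  · intro i
    simp only [Pi.single_apply, Pi.zero_apply]
    positivity
  · obtain rfl : i = v := by simpa [Pi.single_apply] using hi
    rw [adjMat_mulVec_apply, zero_mul]
    exact sum_eq_zero fun w hw => absurd (mem_filter.mp hw).2 (hsink w trivial)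

/-- A closed walk of length `n + 1`, with its vertices indexed cyclically by `Fin (n + 1)`. -/
def HasClosedWalk (E : V → V → Prop) (n : ℕ) : Prop :=
  ∃ c : Fin (n + 1) → V, ∀ k, E (c k) (c (k + 1))

theorem hasClosedWalk_of_iterate {f : V → V} {y : V} {n : ℕ}
    (hf : ∀ k, E (f^[k] y) (f (f^[k] y))) (hy : f^[n + 1] y = y) : HasClosedWalk E n := by
  refine ⟨fun k => f^[k] y, fun k => ?_⟩
  dsimp only
  rw [Fin.val_add_one]
  split_ifs with hk
  · subst hk
    simpa [← Function.iterate_succ_apply', hy] using hf n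
  · simpa [Function.iterate_succ_apply'] using hf k

/-- Every vertex that reaches `v` has an out-neighbour that reaches `v`; following a choice of
such out-neighbours from `v` must eventually revisit a vertex. -/
theorem exists_hasClosedWalk_of_transGen [Finite V] {v : V} (hv : TransGen E v v) :
    ∃ n, HasClosedWalk E n := by
  have hsucc : ∀ u, TransGen E u v → ∃ w, E u w ∧ TransGen E w v := fun u hu => by
    obtain ⟨w, huw, hwv⟩ := TransGen.head'_iff.mp hu
    exact ⟨w, huw, (reflTransGen_iff_eq_or_transGen.mp hwv).elim (fun h => h ▸ hv) id⟩
  choose! f hf using hsucc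
  have horbit : ∀ k, TransGen E (f^[k] v) v := by
    intro k
    induction k with
    | zero => exact hv
    | succ k ih => rw [Function.iterate_succ_apply']; exact (hf _ ih).2
  obtain ⟨a, b, hab, hfab⟩ := Finite.exists_ne_map_eq_of_infinite fun k => f^[k] v
  wlog hlt : a < b generalizing a b
  · exact this b a hab.symm hfab.symm (lt_of_le_of_ne (not_lt.mp hlt) hab.symm)
  obtain ⟨n, rfl⟩ := Nat.exists_eq_add_of_lt hlt
  refine ⟨n, hasClosedWalk_of_iterate (f := f) (y := f^[a] v) (fun k => ?_) ?_⟩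
  · rw [← Function.iterate_add_apply]
    exact (hf _ (horbit _)).1
  · rw [← Function.iterate_add_apply, add_comm, ← add_assoc]
    exact hfab.symm

open Fin.NatCast in
/-- Walk from `c j` along the cycle to `c i`, then return by the arc `c i → c j`. -/
theorem hasClosedWalk_of_chord {n : ℕ} {c : Fin (n + 1) → V} (hc : ∀ k, E (c k) (c (k + 1)))
    {i j : Fin (n + 1)} (hij : E (c i) (c j)) : HasClosedWalk E (i - j).val := by
  refine ⟨fun k => c (j + (k.val : Fin (n + 1))), fun k => ?_⟩
  dsimp only
  rw [Fin.val_add_one]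
  split_ifs with hk
  · subst hk
    simpa using hij
  · push_cast
    rw [← add_assoc]
    exact hc _

theorem Fin.val_sub_lt_of_ne_add_one {n : ℕ} {i j : Fin (n + 1)} (h : j ≠ i + 1) :
    (i - j).val < n := by
  refine lt_of_le_of_ne (Nat.lt_succ_iff.mp (i - j).isLt) fun heq => h ?_
  have : i - j = -1 := Fin.ext (heq.trans Fin.coe_neg_one.symm)
  rw [sub_eq_iff_eq_add] at this
  rw [this]
  abel

theorem exists_chordless_closedWalk (h : ∃ n, HasClosedWalk E n) :
    ∃ n, ∃ c : Fin (n + 1) → V,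
      (∀ k, E (c k) (c (k + 1))) ∧ ∀ i j, E (c i) (c j) → j = i + 1 := by
  obtain ⟨c, hc⟩ := Nat.find_spec h
  refine ⟨_, c, hc, fun i j hij => ?_⟩
  by_contra hj
  exact Nat.find_min h (Fin.val_sub_lt_of_ne_add_one hj) (hasClosedWalk_of_chord hc hij)

theorem one_mem_compSpec_of_transGen [Fintype V] {v : V} (hv : TransGen E v v) :
    1 ∈ compSpec (adjMat E) := by
  obtain ⟨n, c, hc, hchord⟩ := exists_chordless_closedWalk (exists_hasClosedWalk_of_transGen hv)
  set x : V → ℝ := (Set.range c).indicator 1 with hx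
  refine mem_compSpec_of_mulVec_apply_eq adjMat_nonneg (x := x) ?_ ?_ fun u hu => ?_
  · intro h
    simpa [hx] using congr_fun h (c 0)
  · exact Set.indicator_nonneg fun _ _ => zero_le_one
  · obtain ⟨i, rfl⟩ : u ∈ Set.range c := by
      by_contra h
      exact hu (Set.indicator_of_notMem h _)
    rw [adjMat_mulVec_apply, sum_eq_single (c (i + 1))]
    · simp [hx]
    · intro w hw hne
      refine Set.indicator_of_notMem ?_ _
      rintro ⟨j, rfl⟩
      exact hne (by rw [hchord i j (mem_filter.mp hw).2])
    · exact fun h => absurd (mem_filter.mpr ⟨mem_univ _, hc i⟩) h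

end Digraph

/-- `Π(D) = {0}` iff `D` is acyclic. -/
theorem stmt7 {V : Type*} [Fintype V] [Nonempty V] (E : V → V → Prop) :
    compSpec (adjMat E) = {0} ↔ Acyclic E := by
  refine ⟨fun h v hv => ?_, fun hE => ?_⟩
  · have h1 := one_mem_compSpec_of_transGen hv
    rw [h] at h1
    exact one_ne_zero h1
  · ext lam
    refine ⟨hE.eq_zero_of_mem_compSpec, ?_⟩
    rintro rfl
    exact hE.zero_mem_compSpec
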